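/- arXiv:0707.1946 — 4 statements merged into one kernel-verified Lean document; each statement's English description precedes it below -/
import Mathlib

section
/- Let u : ℝ² → ℝ be a 1-Lipschitz function (with respect to the Euclidean norm) whose graph G = {(x, u(x)) : x ∈ ℝ²} contains a lightlike straight line, i.e., there exist x₀ ∈ ℝ² and a unit vector w ∈ ℝ² with u(x₀ + s·w) = u(x₀) + s for all s ∈ ℝ. Then u(x) = u(x₀) + ⟨x − x₀, w⟩ for all x ∈ ℝ², i.e., G is the lightlike plane containing that line. -/
/-!
Write `x - x₀ = t • w + p` with `t = ⟪x - x₀, w⟫` and `p ⟂ w`. Comparing `u x` with the point of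
the line at parameter `t - r`, the Lipschitz bound gives `u x - u x₀ - t ≤ √(r² + ‖p‖²) - r`,
which tends to `0` as `r → ∞`; so `u x ≤ u x₀ + t`. The reverse inequality is the same argument
for `-u` and the line in direction `-w`.
-/

open RealInnerProductSpace

section

variable {E : Type*} [NormedAddCommGroup E] [InnerProductSpace ℝ E]

theorem norm_sub_smul_sq_of_norm_eq_one {w : E} (hw : ‖w‖ = 1) (v : E) (r : ℝ) :
    ‖v - (⟪v, w⟫ - r) • w‖ ^ 2 = ‖v - ⟪v, w⟫ • w‖ ^ 2 + r ^ 2 := by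
  have horth : ⟪v - ⟪v, w⟫ • w, r • w⟫ = 0 := by
    simp [inner_sub_left, inner_smul_left, inner_smul_right, hw]
  have hsplit : v - (⟪v, w⟫ - r) • w = (v - ⟪v, w⟫ • w) + r • w := by
    rw [sub_smul]; abel
  rw [hsplit, sq, sq, sq, norm_add_sq_eq_norm_sq_add_norm_sq_real horth, norm_smul, hw,
    Real.norm_eq_abs, mul_one, abs_mul_abs_self]

theorem LipschitzWith.sub_le_inner_of_map_add_smul {f : E → ℝ} (hf : LipschitzWith 1 f)
    {x₀ w : E} (hw : ‖w‖ = 1) (hline : ∀ s : ℝ, f (x₀ + s • w) = f x₀ + s) (x : E) :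
    f x - f x₀ ≤ ⟪x - x₀, w⟫ := by
  set v := x - x₀
  set t := ⟪v, w⟫
  set c := ‖v - t • w‖ ^ 2
  have hbound : ∀ r : ℝ, f x - f x₀ - t + r ≤ ‖v - (t - r) • w‖ := by
    intro r
    have h := hf.dist_le_mul x (x₀ + (t - r) • w)
    rw [hline, Real.dist_eq, dist_eq_norm, NNReal.coe_one, one_mul,
      show x - (x₀ + (t - r) • w) = v - (t - r) • w by simp only [v]; abel] at h
    linarith [le_abs_self (f x - (f x₀ + (t - r)))]
  by_contra! hpos
  set d := f x - f x₀ - t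
  have hd : 0 < d := by linarith
  -- At `r = (c + 1) / (2d)` the bound `(d + r)² ≤ r² + c` becomes `d² + 1 ≤ 0`.
  set r := (c + 1) / (2 * d)
  have hr : 2 * d * r = c + 1 := by simp only [r]; field_simp
  have hr0 : 0 < r := by positivity
  have hsq := pow_le_pow_left₀ (by linarith) (hbound r) 2
  rw [norm_sub_smul_sq_of_norm_eq_one hw] at hsq
  nlinarith

end

/-- A 1-Lipschitz (pseudo-spacelike) graph containing a lightlike straight line
is the lightlike plane containing that line. -/
theorem stmt0 (u : EuclideanSpace ℝ (Fin 2) → ℝ) (hu : LipschitzWith 1 u)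
    (x₀ w : EuclideanSpace ℝ (Fin 2)) (hw : ‖w‖ = 1)
    (hline : ∀ s : ℝ, u (x₀ + s • w) = u x₀ + s) :
    ∀ x : EuclideanSpace ℝ (Fin 2), u x = u x₀ + (inner ℝ (x - x₀) w : ℝ) := by
  intro x
  have hupper := hu.sub_le_inner_of_map_add_smul hw hline x
  have hlower := hu.neg.sub_le_inner_of_map_add_smul (x₀ := x₀) (w := -w) (by rwa [norm_neg])
    (fun s => by rw [Pi.neg_apply, Pi.neg_apply, smul_neg, ← neg_smul, hline]; ring) x
  rw [Pi.neg_apply, Pi.neg_apply, inner_neg_right] at hlower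
  linarith
end

section
/- Let u : ℝ² → ℝ be a 1-Lipschitz function and suppose [p₁,p₂] and [q₁,q₂] are two segments in ℝ² such that the corresponding curves s ↦ (γ(s), u(γ(s))) over these segments are lightlike segments of the graph (i.e., u restricted to each segment is affine with slope exactly 1 in the direction of the segment). If the open segment ]p₁,p₂[ meets [q₁,q₂], then the two segments lie on a common straight line in ℝ². -/
/-!
Let `x` be a common point, interior to `[p₁, p₂]`. Orient both segments so that `u` increases
along them. Going up from `p₁` to `x` along the first segment and then on to `q₂` along the second,
`u` gains `dist p₁ x + dist x q₂`, while the Lipschitz bound caps this gain by `dist p₁ q₂`. So the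
triangle inequality is an equality, and by strict convexity of the Euclidean norm `x` lies on
`[p₁, q₂]`; likewise `x` lies on `[q₁, p₂]`. Since `x` differs from `p₁` and `p₂`, both `q₁` and
`q₂` lie on the line `p₁p₂`.
-/

open Set

section Lightlike

variable {P : Type*} [PseudoMetricSpace P] {u : P → ℝ} {a b c : P}

-- The oriented form of `|u b - u a| = dist a b`: `u` increases at unit rate from `a` to `b`.
def IsLightlike (u : P → ℝ) (a b : P) : Prop :=
  u b - u a = dist a b

theorem LipschitzWith.sub_le_dist (hu : LipschitzWith 1 u) (a b : P) : u b - u a ≤ dist a b := by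
  simpa [dist_comm b a] using (Real.sub_le_dist _ _).trans (hu.dist_le_mul b a)

theorem abs_sub_eq_dist_iff : |u b - u a| = dist a b ↔ IsLightlike u a b ∨ IsLightlike u b a := by
  rw [abs_eq dist_nonneg, IsLightlike, IsLightlike, dist_comm b a]
  exact or_congr_right ⟨fun h => by linarith, fun h => by linarith⟩

theorem IsLightlike.of_dist_add_dist_eq (hu : LipschitzWith 1 u) (h : IsLightlike u a c)
    (hb : dist a b + dist b c = dist a c) : IsLightlike u a b ∧ IsLightlike u b c := by
  have hab := hu.sub_le_dist a b
  have hbc := hu.sub_le_dist b c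
  unfold IsLightlike at *
  constructor <;> linarith

theorem IsLightlike.dist_add_dist_eq (hu : LipschitzWith 1 u) (hab : IsLightlike u a b)
    (hbc : IsLightlike u b c) : dist a b + dist b c = dist a c := by
  refine le_antisymm ?_ (dist_triangle a b c)
  calc dist a b + dist b c = u c - u a := by rw [← hab, ← hbc]; ring
    _ ≤ dist a c := hu.sub_le_dist a c

end Lightlike

section OrderedField

variable {R V : Type*} [Field R] [LinearOrder R] [AddCommGroup V] [Module R V]

theorem sbtw_of_mem_openSegment [IsStrictOrderedRing R] {x y z : V} (hxz : x ≠ z)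
    (hy : y ∈ openSegment R x z) : Sbtw R x y z := by
  refine ⟨mem_segment_iff_wbtw.1 (openSegment_subset_segment R x z hy), ?_, ?_⟩
  · rintro rfl
    exact hxz (left_mem_openSegment_iff.1 hy)
  · rintro rfl
    exact hxz (right_mem_openSegment_iff.1 hy)

theorem Wbtw.mem_affineSpan_of_sbtw {P : Type*} [AddTorsor V P] {p₁ p₂ x q : P}
    (h : Wbtw R p₁ x q) (hx : Sbtw R p₁ x p₂) : q ∈ line[R, p₁, p₂] :=
  affineSpan_pair_le_of_mem_of_mem (left_mem_affineSpan_pair R p₁ p₂) hx.wbtw.mem_affineSpan <|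
    h.collinear.mem_affineSpan_of_mem_of_ne (by simp) (by simp) (by simp) hx.left_ne

end OrderedField

section StrictConvex

variable {V P : Type*} [NormedAddCommGroup V] [NormedSpace ℝ V] [StrictConvexSpace ℝ V]
  [MetricSpace P] [NormedAddTorsor V P] {u : P → ℝ} {p₁ p₂ q₁ q₂ x : P}

theorem mem_affineSpan_of_isLightlike (hu : LipschitzWith 1 u) (hp : IsLightlike u p₁ p₂)
    (hq : IsLightlike u q₁ q₂) (hxp : Sbtw ℝ p₁ x p₂) (hxq : Wbtw ℝ q₁ x q₂) :
    q₁ ∈ line[ℝ, p₁, p₂] ∧ q₂ ∈ line[ℝ, p₁, p₂] := by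
  obtain ⟨hp₁x, hxp₂⟩ := hp.of_dist_add_dist_eq hu hxp.wbtw.dist_add_dist
  obtain ⟨hq₁x, hxq₂⟩ := hq.of_dist_add_dist_eq hu hxq.dist_add_dist
  have hq₁ : Wbtw ℝ q₁ x p₂ := dist_add_dist_eq_iff.1 (hq₁x.dist_add_dist_eq hu hxp₂)
  have hq₂ : Wbtw ℝ p₁ x q₂ := dist_add_dist_eq_iff.1 (hp₁x.dist_add_dist_eq hu hxq₂)
  refine ⟨?_, hq₂.mem_affineSpan_of_sbtw hxp⟩
  rw [pair_comm]
  exact hq₁.symm.mem_affineSpan_of_sbtw hxp.symm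

theorem mem_affineSpan_of_abs_sub_eq_dist (hu : LipschitzWith 1 u)
    (hp : |u p₂ - u p₁| = dist p₁ p₂) (hq : |u q₂ - u q₁| = dist q₁ q₂)
    (hxp : Sbtw ℝ p₁ x p₂) (hxq : Wbtw ℝ q₁ x q₂) :
    q₁ ∈ line[ℝ, p₁, p₂] ∧ q₂ ∈ line[ℝ, p₁, p₂] := by
  rcases abs_sub_eq_dist_iff.1 hp with hp | hp <;> rcases abs_sub_eq_dist_iff.1 hq with hq | hq
  · exact mem_affineSpan_of_isLightlike hu hp hq hxp hxq
  · exact (mem_affineSpan_of_isLightlike hu hp hq hxp hxq.symm).symm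
  · rw [pair_comm]
    exact mem_affineSpan_of_isLightlike hu hp hq hxp.symm hxq
  · rw [pair_comm]
    exact (mem_affineSpan_of_isLightlike hu hp hq hxp.symm hxq.symm).symm

end StrictConvex

theorem stmt1_general (u : EuclideanSpace ℝ (Fin 2) → ℝ) (hu : LipschitzWith 1 u)
    (p₁ p₂ q₁ q₂ : EuclideanSpace ℝ (Fin 2))
    (hp : p₁ ≠ p₂)
    (hlp : |u p₂ - u p₁| = ‖p₂ - p₁‖)
    (hlq : |u q₂ - u q₁| = ‖q₂ - q₁‖)
    (hmeet : (openSegment ℝ p₁ p₂ ∩ segment ℝ q₁ q₂).Nonempty) :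
    Collinear ℝ ({p₁, p₂, q₁, q₂} : Set (EuclideanSpace ℝ (Fin 2))) := by
  obtain ⟨x, hxp, hxq⟩ := hmeet
  rw [← dist_eq_norm'] at hlp hlq
  obtain ⟨hq₁, hq₂⟩ := mem_affineSpan_of_abs_sub_eq_dist hu hlp hlq
    (sbtw_of_mem_openSegment hp hxp) (mem_segment_iff_wbtw.1 hxq)
  refine (collinear_insert_insert_of_mem_affineSpan_pair hq₁ hq₂).subset ?_
  intro y hy
  simp only [mem_insert_iff, mem_singleton_iff] at hy ⊢
  tauto

/-- Two lightlike (singular) segments of a pseudo-spacelike graph that meet in the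
interior of one of them lie on a common straight line. -/
theorem stmt1 (u : EuclideanSpace ℝ (Fin 2) → ℝ) (hu : LipschitzWith 1 u)
    (p₁ p₂ q₁ q₂ : EuclideanSpace ℝ (Fin 2))
    (hp : p₁ ≠ p₂) (hq : q₁ ≠ q₂)
    (hlp : |u p₂ - u p₁| = ‖p₂ - p₁‖)
    (hlq : |u q₂ - u q₁| = ‖q₂ - q₁‖)
    (hmeet : (openSegment ℝ p₁ p₂ ∩ segment ℝ q₁ q₂).Nonempty) :
    Collinear ℝ ({p₁, p₂, q₁, q₂} : Set (EuclideanSpace ℝ (Fin 2))) :=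
  stmt1_general u hu p₁ p₂ q₁ q₂ hp hlp hlq hmeet
end

section
/- Let θ : ℝ → ℝ be a continuous strictly increasing function and define γ : ℝ → ℝ² ≅ ℂ by γ(s) = γ(0) + ∫₀ˢ e^{iθ(x)} dx. Then for all s ≠ s₀, ‖γ(s) − γ(s₀)‖₀ < |s − s₀|. Consequently the lightlike curve Γ(s) = (γ(s), s) in Lorentz-Minkowski space satisfies: Γ(s) − Γ(s₀) is timelike for all s ≠ s₀, i.e., Γ − {Γ(s₀)} lies in the interior of the light cone with vertex Γ(s₀). -/
/-!
On `[a, b]` the unit vectors `exp (θ x * I)` have integral of norm at most `b - a`, and since `ℂ` is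
strictly convex, equality would force `exp (θ x * I)` to be almost everywhere constant. An injective
`θ` meets each fibre `c + 2πℤ` of `t ↦ exp (t * I)` at most countably often, so this cannot happen:
every chord of `γ` is strictly shorter than the parameter interval, i.e. every chord of `Γ` is timelike.
-/

open MeasureTheory Complex Set Function

lemma countable_setOf_exp_mul_I_eq (c : ℂ) : {t : ℝ | exp (t * I) = c}.Countable := by
  rcases eq_empty_or_nonempty {t : ℝ | exp (t * I) = c} with h | ⟨t₀, ht₀⟩
  · simp [h]
  refine (countable_range fun n : ℤ => t₀ + n * (2 * Real.pi)).mono fun t ht => ?_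
  obtain ⟨n, hn⟩ := exp_eq_exp_iff_exists_int.1 (ht.trans ht₀.symm)
  refine ⟨n, ?_⟩
  have : ((t₀ + n * (2 * Real.pi) : ℝ) : ℂ) * I = t * I := by push_cast; rw [hn]; ring
  exact_mod_cast mul_right_cancel₀ I_ne_zero this

lemma intervalIntegrable_exp_mul_I {θ : ℝ → ℝ} (hθ : Measurable θ) (a b : ℝ) :
    IntervalIntegrable (fun x => exp (θ x * I)) volume a b :=
  intervalIntegrable_const.mono_fun'
    (by fun_prop : Measurable fun x => exp (θ x * I)).aestronglyMeasurable
    (.of_forall fun x => (norm_exp_ofReal_mul_I (θ x)).le)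

lemma norm_integral_exp_mul_I_lt {θ : ℝ → ℝ} (hθ : Injective θ) {a b : ℝ} (hab : a < b) :
    ‖∫ x in a..b, exp (θ x * I)‖ < b - a := by
  have h_le : ∀ᵐ x ∂volume.restrict (Ioc a b), ‖exp (θ x * I)‖ ≤ 1 :=
    .of_forall fun x => (norm_exp_ofReal_mul_I (θ x)).le
  rcases ae_eq_const_or_norm_setIntegral_lt_of_norm_le_const measure_Ioc_lt_top.ne h_le
    with h_const | h_lt
  · exfalso
    set c := ⨍ x in Ioc a b, exp (θ x * I)
    have h_fibre : volume (θ ⁻¹' {t : ℝ | exp (t * I) = c}) = 0 :=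
      ((countable_setOf_exp_mul_I_eq c).preimage hθ).measure_zero volume
    have h_null : volume (Ioc a b) = 0 := by
      rw [measure_eq_zero_iff_ae_notMem] at h_fibre ⊢
      filter_upwards [h_fibre, (ae_restrict_iff' measurableSet_Ioc).1 h_const] with x hx hxc hmem
      exact hx (hxc hmem)
    simp only [Real.volume_Ioc, ENNReal.ofReal_eq_zero, tsub_nonpos] at h_null
    exact h_null.not_gt hab
  · rwa [Real.volume_real_Ioc_of_le hab.le, mul_one, ← intervalIntegral.integral_of_le hab.le] at h_lt

lemma norm_integral_exp_mul_I_lt_abs {θ : ℝ → ℝ} (hθ : Injective θ) {a b : ℝ} (hab : a ≠ b) :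
    ‖∫ x in a..b, exp (θ x * I)‖ < |b - a| := by
  rcases hab.lt_or_gt with h | h
  · simpa [abs_of_pos (sub_pos.2 h)] using norm_integral_exp_mul_I_lt hθ h
  · rw [intervalIntegral.integral_symm, norm_neg, abs_sub_comm, abs_of_pos (sub_pos.2 h)]
    exact norm_integral_exp_mul_I_lt hθ h

theorem stmt4_general (θ : ℝ → ℝ) (hθm : StrictMono θ)
    (γ : ℝ → ℂ)
    (hγ : ∀ s : ℝ, γ s = γ 0 + ∫ x in (0:ℝ)..s, Complex.exp (θ x * Complex.I)) :
    ∀ s s₀ : ℝ, s ≠ s₀ →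
      ‖γ s - γ s₀‖ < |s - s₀| ∧
      ‖γ s - γ s₀‖ ^ 2 - (s - s₀) ^ 2 < 0 := by
  intro s s₀ hs
  have h_chord : γ s - γ s₀ = ∫ x in s₀..s, exp (θ x * I) := by
    rw [hγ s, hγ s₀, add_sub_add_left_eq_sub]
    exact intervalIntegral.integral_interval_sub_left
      (intervalIntegrable_exp_mul_I hθm.monotone.measurable 0 s)
      (intervalIntegrable_exp_mul_I hθm.monotone.measurable 0 s₀)
  have h_lt : ‖γ s - γ s₀‖ < |s - s₀| :=
    h_chord ▸ norm_integral_exp_mul_I_lt_abs hθm.injective hs.symm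
  refine ⟨h_lt, ?_⟩
  have h_sq := pow_lt_pow_left₀ h_lt (norm_nonneg _) two_ne_zero
  rw [sq_abs] at h_sq
  linarith

/-- For a lightlike curve `Γ(s) = (γ(s), s)` with strictly turning tangent angle,
any chord is timelike: `‖γ s - γ s₀‖ < |s - s₀|`. -/
theorem stmt4 (θ : ℝ → ℝ) (hθc : Continuous θ) (hθm : StrictMono θ)
    (γ : ℝ → ℂ)
    (hγ : ∀ s : ℝ, γ s = γ 0 + ∫ x in (0:ℝ)..s, Complex.exp (θ x * Complex.I)) :
    ∀ s s₀ : ℝ, s ≠ s₀ →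
      ‖γ s - γ s₀‖ < |s - s₀| ∧
      ‖γ s - γ s₀‖ ^ 2 - (s - s₀) ^ 2 < 0 :=
  stmt4_general θ hθm γ hγ
end

section
/- Let θ : ℝ → ℝ be continuous and strictly increasing, let γ(s) = γ(0) + ∫₀ˢ e^{iθ(x)} dx (identifying ℝ² ≅ ℂ), and let Γ(s) = (γ(s), s) be the associated lightlike curve in ℝ³₁. Let Σ = {(x,t) : t = ⟨x,σ⟩₀ + c} be any spacelike plane, i.e., ‖σ‖₀ < 1. Then Γ meets Σ in exactly one point, and the intersection is transversal: the function f(s) = s − ⟨γ(s),σ⟩₀ − c satisfies f'(s) ≥ 1 − ‖σ‖₀ > 0 and f is a bijection from ℝ onto ℝ. -/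
/-!
The height function `f s = s - ⟨γ s, σ⟩₀ - c` has derivative `1 - ⟨γ' s, σ⟩₀`, and since
`γ' s = e^{iθ(s)}` is a unit vector, Cauchy–Schwarz bounds this below by `1 - ‖σ‖₀ > 0`.
A real function whose derivative is bounded below by a positive constant grows at least
linearly in both directions, so it is a strictly increasing bijection of `ℝ`; its unique zero
is the unique intersection point of `Γ` with the plane.
-/

open Filter

theorem hasDerivAt_of_eq_add_integral {E : Type*} [NormedAddCommGroup E] [NormedSpace ℝ E]
    [CompleteSpace E] {g γ : ℝ → E} (hg : Continuous g)
    (hγ : ∀ s, γ s = γ 0 + ∫ x in (0:ℝ)..s, g x) (s : ℝ) : HasDerivAt γ (g s) s :=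
  ((hg.integral_hasStrictDerivAt 0 s).hasDerivAt.const_add (γ 0)).congr_of_eventuallyEq
    (Eventually.of_forall hγ)

theorem re_mul_conj_le_norm_of_norm_eq_one {u : ℂ} (hu : ‖u‖ = 1) (σ : ℂ) :
    (u * starRingEnd ℂ σ).re ≤ ‖σ‖ :=
  calc (u * starRingEnd ℂ σ).re ≤ ‖u * starRingEnd ℂ σ‖ := Complex.re_le_norm _
    _ = ‖σ‖ := by rw [norm_mul, hu, one_mul, Complex.norm_conj]

section LowerBoundedDeriv

variable {f : ℝ → ℝ} {k : ℝ}

theorem tendsto_atTop_atTop_of_pos_le_deriv (hf : Differentiable ℝ f) (hk : 0 < k)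
    (hf' : ∀ x, k ≤ deriv f x) : Tendsto f atTop atTop := by
  have hlin : ∀ᶠ x in atTop, f 0 + k * x ≤ f x :=
    (eventually_ge_atTop 0).mono fun x hx => by
      linarith [mul_sub_le_image_sub_of_le_deriv hf hf' hx]
  exact tendsto_atTop_mono' atTop hlin
    (tendsto_atTop_add_const_left _ _ (tendsto_id.const_mul_atTop hk))

theorem tendsto_atBot_atBot_of_pos_le_deriv (hf : Differentiable ℝ f) (hk : 0 < k)
    (hf' : ∀ x, k ≤ deriv f x) : Tendsto f atBot atBot := by
  have hlin : ∀ᶠ x in atBot, f x ≤ f 0 + k * x :=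
    (eventually_le_atBot 0).mono fun x hx => by
      linarith [mul_sub_le_image_sub_of_le_deriv hf hf' hx]
  exact tendsto_atBot_mono' atBot hlin
    (tendsto_atBot_add_const_left _ _ (tendsto_id.const_mul_atBot hk))

theorem bijective_of_pos_le_deriv (hf : Differentiable ℝ f) (hk : 0 < k)
    (hf' : ∀ x, k ≤ deriv f x) : Function.Bijective f :=
  ⟨(strictMono_of_deriv_pos fun x => hk.trans_le (hf' x)).injective,
    hf.continuous.surjective (tendsto_atTop_atTop_of_pos_le_deriv hf hk hf')
      (tendsto_atBot_atBot_of_pos_le_deriv hf hk hf')⟩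

end LowerBoundedDeriv

theorem stmt16_general (θ : ℝ → ℝ) (hθc : Continuous θ)
    (γ : ℝ → ℂ)
    (hγ : ∀ s : ℝ, γ s = γ 0 + ∫ x in (0:ℝ)..s, Complex.exp (θ x * Complex.I))
    (σ : ℂ) (hσ : ‖σ‖ < 1) (c : ℝ) :
    (∀ s : ℝ,
      HasDerivAt (fun s' => s' - (γ s' * (starRingEnd ℂ) σ).re - c)
        (1 - (Complex.exp (θ s * Complex.I) * (starRingEnd ℂ) σ).re) s ∧
      1 - ‖σ‖ ≤ 1 - (Complex.exp (θ s * Complex.I) * (starRingEnd ℂ) σ).re) ∧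
    Function.Bijective (fun s : ℝ => s - (γ s * (starRingEnd ℂ) σ).re - c) ∧
    (∃! s : ℝ, s = (γ s * (starRingEnd ℂ) σ).re + c) := by
  set f : ℝ → ℝ := fun s => s - (γ s * (starRingEnd ℂ) σ).re - c
  have hγ' := hasDerivAt_of_eq_add_integral (by fun_prop) hγ
  have hf' : ∀ s, HasDerivAt f (1 - (Complex.exp (θ s * Complex.I) * starRingEnd ℂ σ).re) s :=
    fun s => ((hasDerivAt_id s).sub
      (Complex.reCLM.hasFDerivAt.comp_hasDerivAt s ((hγ' s).mul_const _))).sub_const c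
  have hbound : ∀ s, 1 - ‖σ‖ ≤ 1 - (Complex.exp (θ s * Complex.I) * starRingEnd ℂ σ).re :=
    fun s => sub_le_sub_left
      (re_mul_conj_le_norm_of_norm_eq_one (Complex.norm_exp_ofReal_mul_I _) σ) 1
  have hbij : Function.Bijective f :=
    bijective_of_pos_le_deriv (fun s => (hf' s).differentiableAt) (sub_pos.2 hσ)
      fun s => (hf' s).deriv ▸ hbound s
  refine ⟨fun s => ⟨hf' s, hbound s⟩, hbij, ?_⟩
  exact (existsUnique_congr fun s => by simp only [f, sub_sub, sub_eq_zero]).1 (hbij.existsUnique 0)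

/-- A lightlike boundary curve `Γ(s) = (γ(s), s)` meets every spacelike plane
`{t = ⟨x,σ⟩₀ + c}` (with `‖σ‖₀ < 1`) transversally in exactly one point. -/
theorem stmt16 (θ : ℝ → ℝ) (hθc : Continuous θ) (hθm : StrictMono θ)
    (γ : ℝ → ℂ)
    (hγ : ∀ s : ℝ, γ s = γ 0 + ∫ x in (0:ℝ)..s, Complex.exp (θ x * Complex.I))
    (σ : ℂ) (hσ : ‖σ‖ < 1) (c : ℝ) :
    (∀ s : ℝ,
      HasDerivAt (fun s' => s' - (γ s' * (starRingEnd ℂ) σ).re - c)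
        (1 - (Complex.exp (θ s * Complex.I) * (starRingEnd ℂ) σ).re) s ∧
      1 - ‖σ‖ ≤ 1 - (Complex.exp (θ s * Complex.I) * (starRingEnd ℂ) σ).re) ∧
    Function.Bijective (fun s : ℝ => s - (γ s * (starRingEnd ℂ) σ).re - c) ∧
    (∃! s : ℝ, s = (γ s * (starRingEnd ℂ) σ).re + c) :=
  stmt16_general θ hθc γ hγ σ hσ c
end
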